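/- arXiv:2511.20164 — 2 statements merged into one kernel-verified Lean document; each statement's English description precedes it below -/
import Mathlib

section
/- Let C be a triangulated category, Q the heart of a bounded t-structure on C with cohomology functors H^i : C → Q, and let N ⊆ C be a thick subcategory which is generated by a single object A (i.e. N is the smallest thick subcategory of C containing A). Assume that Q ∩ N is a Serre subcategory of Q (closed under subobjects, quotients, and extensions in Q). Then the following are equivalent: (i) for every object F ∈ N and every i ∈ ℤ, one has H^i(F) ∈ N; (ii) there exists an object B ∈ Q such that N is the smallest thick subcategory of C containing B. -/
open CategoryTheory CategoryTheory.Limits CategoryTheory.Category ZeroObject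
  CategoryTheory.Pretriangulated CategoryTheory.Triangulated

namespace PaperFormal

variable {C : Type*} [Category C] [HasZeroObject C] [HasShift C ℤ]
  [Preadditive C] [∀ n : ℤ, (shiftFunctor C n).Additive] [Pretriangulated C]

/-- A thick subcategory of a (pre)triangulated category, encoded as a predicate on objects:
it contains the zero object, and is closed under isomorphisms, shifts, extensions
(in any distinguished triangle, if the two outer objects satisfy the predicate, so does the
middle one) and direct summands. -/
structure IsThickSubcategory (N : C → Prop) : Prop where
  zero : N 0
  mem_of_iso : ∀ {X Y : C}, (X ≅ Y) → N X → N Y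
  shift : ∀ (X : C) (n : ℤ), N X → N (X⟦n⟧)
  ext₂ : ∀ T : Triangle C, (T ∈ distTriang C) → N T.obj₁ → N T.obj₃ → N T.obj₂
  summand : ∀ (X Y : C) (s : X ⟶ Y) (r : Y ⟶ X), s ≫ r = 𝟙 X → N Y → N X

/-- `N` is the smallest thick subcategory of `C` containing the object `A`:
`N` is thick, contains `A`, and is contained in any thick subcategory containing `A`. -/
def IsThickGeneratedBy (N : C → Prop) (A : C) : Prop :=
  IsThickSubcategory N ∧ N A ∧
    ∀ N' : C → Prop, IsThickSubcategory N' → N' A → ∀ X : C, N X → N' X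

/-- A Serre subcategory of an abelian category: a full subcategory (encoded as a predicate
on objects) closed under subobjects, quotients and extensions. -/
structure IsSerreSubcategory {A : Type*} [Category A] [Abelian A] (P : A → Prop) : Prop where
  mem_of_mono : ∀ {X Y : A} (f : X ⟶ Y), Mono f → P Y → P X
  mem_of_epi : ∀ {X Y : A} (f : X ⟶ Y), Epi f → P X → P Y
  mem_of_extension : ∀ S : ShortComplex A, S.ShortExact → P S.X₁ → P S.X₃ → P S.X₂

/-- The objects of `C` lying in the image of the heart, i.e. isomorphic to the image of an
object of `Q` under the embedding `ι : Q ⥤ C`. -/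
def heartProp {Q : Type*} [Category Q] (ι : Q ⥤ C) : C → Prop :=
  fun X => ∃ a : Q, Nonempty (ι.obj a ≅ X)

/-- The data exhibiting an abelian category `Q`, fully faithfully embedded in a
(pre)triangulated category `C` via `ι : Q ⥤ C`, as the heart of a bounded t-structure on `C`,
together with the associated cohomology functors `H^i : C ⥤ Q` and their standard
properties: normalization on the heart, compatibility with shifts, boundedness
(every object has only finitely many nonzero cohomology objects), the long exact
cohomology sequence associated to a distinguished triangle, and the cohomological
filtration of any object. -/
structure HeartOfBoundedTStructure (Q : Type*) [Category Q] [Abelian Q] (ι : Q ⥤ C) where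
  /-- the embedding of the heart is full -/
  full : ι.Full
  /-- the embedding of the heart is faithful -/
  faithful : ι.Faithful
  /-- the underlying t-structure on `C` -/
  t : TStructure C
  /-- the image of `Q` is exactly the heart of the t-structure `t` -/
  heart_iff : ∀ X : C, heartProp ι X ↔ (t.le 0 X ∧ t.ge 0 X)
  /-- the t-structure is bounded -/
  t_bounded : ∀ X : C, (∃ n : ℤ, t.le n X) ∧ (∃ n : ℤ, t.ge n X)
  /-- the cohomology functors `H^i : C ⥤ Q` -/
  H (i : ℤ) : C ⥤ Q
  H_shift (i n : ℤ) (X : C) : (H i).obj (X⟦n⟧) ≅ (H (i + n)).obj X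
  H_heart_zero (a : Q) : (H 0).obj (ι.obj a) ≅ a
  H_heart_ne_zero (a : Q) (i : ℤ) (hi : i ≠ 0) : IsZero ((H i).obj (ι.obj a))
  /-- boundedness: every object has only finitely many nonzero cohomology objects -/
  bounded (X : C) : ∃ a b : ℤ, ∀ i : ℤ, (i < a ∨ b < i) → IsZero ((H i).obj X)
  /-- connecting morphisms of the long exact cohomology sequence -/
  δ (T : Triangle C) (hT : T ∈ distTriang C) (i : ℤ) :
    (H i).obj T.obj₃ ⟶ (H (i + 1)).obj T.obj₁
  comp_zero₁ (T : Triangle C) (hT : T ∈ distTriang C) (i : ℤ) :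
    (H i).map T.mor₁ ≫ (H i).map T.mor₂ = 0
  comp_zero₂ (T : Triangle C) (hT : T ∈ distTriang C) (i : ℤ) :
    (H i).map T.mor₂ ≫ δ T hT i = 0
  comp_zero₃ (T : Triangle C) (hT : T ∈ distTriang C) (i : ℤ) :
    δ T hT i ≫ (H (i + 1)).map T.mor₁ = 0
  exact₁ (T : Triangle C) (hT : T ∈ distTriang C) (i : ℤ) :
    (ShortComplex.mk _ _ (comp_zero₁ T hT i)).Exact
  exact₂ (T : Triangle C) (hT : T ∈ distTriang C) (i : ℤ) :
    (ShortComplex.mk _ _ (comp_zero₂ T hT i)).Exact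
  exact₃ (T : Triangle C) (hT : T ∈ distTriang C) (i : ℤ) :
    (ShortComplex.mk _ _ (comp_zero₃ T hT i)).Exact
  /-- every object admits a finite filtration with subquotients the shifted
  cohomology objects `H^k(X)⟦-k⟧` -/
  filtration (X : C) : ∃ (a b : ℤ) (F : ℤ → C), IsZero (F (a - 1)) ∧ Nonempty (F b ≅ X) ∧
    ∀ k : ℤ, ∃ (f : F (k - 1) ⟶ F k) (g : F k ⟶ (ι.obj ((H k).obj X))⟦(-k)⟧)
      (h : (ι.obj ((H k).obj X))⟦(-k)⟧ ⟶ (F (k - 1))⟦(1 : ℤ)⟧),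
      Triangle.mk f g h ∈ distTriang C

/-- A full subcategory of `C` (encoded as a predicate on objects) is the heart of a
bounded t-structure on `C`. -/
def IsHeartOfBoundedTStructure (P : C → Prop) : Prop :=
  ∃ t : TStructure C,
    (∀ X : C, (∃ n : ℤ, t.le n X) ∧ (∃ n : ℤ, t.ge n X)) ∧
    (∀ X : C, P X ↔ (t.le 0 X ∧ t.ge 0 X))

/-!
If `N` contains the cohomology of its objects, take for `B` the direct sum of the finitely many
nonzero `H^k(A)`: it lies in `N` since `Q ∩ N` is closed under extensions, and a thick
subcategory containing `B` contains every `H^k(A)` as a retract, hence contains `A` by the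
cohomological filtration of `A`. Conversely, if `N = ⟨B⟩` with `B` in the heart, the objects of
`N` all of whose cohomology objects lie in `N` form a thick subcategory (for extensions, use the
long exact cohomology sequence and the Serre property); it contains `B`, so it is all of `N`.
-/

namespace IsThickSubcategory

variable {N : C → Prop} (hN : IsThickSubcategory N)
include hN

lemma mem_of_retract {X Y : C} (e : Retract X Y) (hY : N Y) : N X :=
  hN.summand X Y e.i e.r e.retract hY

lemma mem_of_isZero {X : C} (hX : IsZero X) : N X :=
  hN.mem_of_iso ((isZero_zero C).iso hX) hN.zero

lemma mem_obj₁_iff_mem_obj₂ {T : Triangle C} (hT : T ∈ distTriang C) (h₃ : N T.obj₃) :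
    N T.obj₁ ↔ N T.obj₂ :=
  ⟨fun h₁ => hN.ext₂ T hT h₁ h₃,
    fun h₂ => hN.ext₂ _ (inv_rot_of_distTriang T hT) (hN.shift _ (-1) h₃) h₂⟩

end IsThickSubcategory

lemma IsSerreSubcategory.mem_of_exact {D : Type*} [Category D] [Abelian D] {P : D → Prop}
    (hP : IsSerreSubcategory P) {S : ShortComplex D} (hS : S.Exact)
    (h₁ : P S.X₁) (h₃ : P S.X₃) : P S.X₂ := by
  let d := S.homologyData
  have := hS.epi_f' d.left
  have := hS.mono_g' d.right
  exact (hP.mem_of_extension _ (hS.shortExact d) (hP.mem_of_epi d.left.f' inferInstance h₁)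
    (hP.mem_of_mono d.right.g' inferInstance h₃) :)

section ListBiprod

variable {D : Type*} [Category D] [HasZeroMorphisms D] [HasZeroObject D] [HasBinaryBiproducts D]

noncomputable def listBiprod : List D → D
  | [] => 0
  | X :: l => X ⊞ listBiprod l

lemma nonempty_retract_listBiprod {X : D} {l : List D} (hX : X ∈ l) :
    Nonempty (Retract X (listBiprod l)) := by
  induction l with
  | nil => exact absurd hX List.not_mem_nil
  | cons Y l ih =>
    rcases List.mem_cons.1 hX with rfl | hX
    · exact ⟨(BinaryBiproduct.bicone X _).retract_left⟩
    · exact ⟨(ih hX).some.trans (BinaryBiproduct.bicone Y _).retract_right⟩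

end ListBiprod

lemma IsSerreSubcategory.mem_listBiprod {D : Type*} [Category D] [Abelian D] {P : D → Prop}
    (hP : IsSerreSubcategory P) (h₀ : P 0) {l : List D} (hl : ∀ X ∈ l, P X) :
    P (listBiprod l) := by
  induction l with
  | nil => exact h₀
  | cons X l ih =>
    exact hP.mem_of_extension _ (ShortComplex.Splitting.ofHasBinaryBiproduct X _).shortExact
      (hl X List.mem_cons_self) (ih fun Y hY => hl Y (List.mem_cons_of_mem X hY))

namespace HeartOfBoundedTStructure

variable {Q : Type*} [Category Q] [Abelian Q] {ι : Q ⥤ C} (hQ : HeartOfBoundedTStructure Q ι)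
include hQ

lemma isZero_ι_obj {a : Q} (ha : IsZero a) : IsZero (ι.obj a) :=
  have := hQ.full
  ι.map_isZero ha

lemma isZero_H_obj_zero (i : ℤ) : IsZero ((hQ.H i).obj (0 : C)) := by
  obtain ⟨_, b, hb⟩ := hQ.bounded (0 : C)
  -- `0 ≅ 0⟦n⟧` moves the degree `i` past the bound `b`
  obtain ⟨n, hn⟩ : ∃ n : ℤ, b < i + n := ⟨b - i + 1, by omega⟩
  exact (hb (i + n) (Or.inr hn)).of_iso <|
    (hQ.H i).mapIso ((isZero_zero C).iso ((shiftFunctor C n).map_isZero (isZero_zero C))) ≪≫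
      hQ.H_shift i n 0

variable {N : C → Prop}

lemma mem_of_forall_mem_H (hN : IsThickSubcategory N) (X : C)
    (hX : ∀ k : ℤ, N (ι.obj ((hQ.H k).obj X))) : N X := by
  obtain ⟨a, b, F, hFa, ⟨e⟩, hF⟩ := hQ.filtration X
  have step (k : ℤ) : N (F (k - 1)) ↔ N (F k) := by
    obtain ⟨_, _, _, hT⟩ := hF k
    exact hN.mem_obj₁_iff_mem_obj₂ hT (hN.shift _ (-k) (hX k))
  refine hN.mem_of_iso e (Int.inductionOn' b (a - 1) (hN.mem_of_isZero hFa) ?_ ?_)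
  · intro k _ hk
    exact (step (k + 1)).1 (by simpa using hk)
  · intro k _ hk
    exact (step k).2 hk

lemma mem_H_ι_obj (hN : IsThickSubcategory N) {a : Q} (ha : N (ι.obj a)) (i : ℤ) :
    N (ι.obj ((hQ.H i).obj (ι.obj a))) := by
  rcases eq_or_ne i 0 with rfl | hi
  · exact hN.mem_of_iso (ι.mapIso (hQ.H_heart_zero a)).symm ha
  · exact hN.mem_of_isZero (hQ.isZero_ι_obj (hQ.H_heart_ne_zero a i hi))

lemma isThickSubcategory_and_forall_mem_H (hN : IsThickSubcategory N)
    (hSerre : IsSerreSubcategory (fun a : Q => N (ι.obj a))) :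
    IsThickSubcategory (fun F => N F ∧ ∀ i : ℤ, N (ι.obj ((hQ.H i).obj F))) where
  zero := ⟨hN.zero, fun i => hN.mem_of_isZero (hQ.isZero_ι_obj (hQ.isZero_H_obj_zero i))⟩
  mem_of_iso e hX :=
    ⟨hN.mem_of_iso e hX.1, fun i => hN.mem_of_iso (ι.mapIso ((hQ.H i).mapIso e)) (hX.2 i)⟩
  shift X n hX :=
    ⟨hN.shift X n hX.1, fun i =>
      hN.mem_of_iso (ι.mapIso (hQ.H_shift i n X).symm) (hX.2 (i + n))⟩
  ext₂ T hT h₁ h₃ :=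
    ⟨hN.ext₂ T hT h₁.1 h₃.1, fun i =>
      hSerre.mem_of_exact (hQ.exact₁ T hT i) (h₁.2 i) (h₃.2 i)⟩
  summand X Y s r hsr hY :=
    ⟨hN.summand X Y s r hsr hY.1, fun i =>
      hN.mem_of_retract ((Retract.mk s r hsr).map (hQ.H i ⋙ ι)) (hY.2 i)⟩

lemma exists_mem_heart_generating_of_forall_mem_H (hN : IsThickSubcategory N)
    (hSerre : IsSerreSubcategory (fun a : Q => N (ι.obj a))) (X : C)
    (hX : ∀ k : ℤ, N (ι.obj ((hQ.H k).obj X))) :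
    ∃ B : Q, N (ι.obj B) ∧
      ∀ N' : C → Prop, IsThickSubcategory N' → N' (ι.obj B) → N' X := by
  obtain ⟨a, b, hab⟩ := hQ.bounded X
  let B := listBiprod ((Finset.Icc a b).toList.map fun k => (hQ.H k).obj X)
  refine ⟨B, hSerre.mem_listBiprod (hN.mem_of_isZero (hQ.isZero_ι_obj (isZero_zero Q))) ?_, ?_⟩
  · simp only [List.mem_map, Finset.mem_toList]
    rintro _ ⟨k, -, rfl⟩
    exact hX k
  · intro N' hN' hB
    refine hQ.mem_of_forall_mem_H hN' X fun k => ?_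
    by_cases hk : a ≤ k ∧ k ≤ b
    · obtain ⟨e⟩ := nonempty_retract_listBiprod <| List.mem_map_of_mem
        (f := fun k => (hQ.H k).obj X) (Finset.mem_toList.2 (Finset.mem_Icc.2 hk))
      exact hN'.mem_of_retract (e.map ι) hB
    · exact hN'.mem_of_isZero (hQ.isZero_ι_obj (hab k (by omega)))

end HeartOfBoundedTStructure

theorem statement_0_general
    (Q : Type*) [Category Q] [Abelian Q] (ι : Q ⥤ C)
    (hQ : HeartOfBoundedTStructure Q ι)
    (N : C → Prop) (A : C) (hNA : IsThickGeneratedBy N A)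
    (hSerre : IsSerreSubcategory (fun a : Q => N (ι.obj a))) :
    (∀ F : C, N F → ∀ i : ℤ, N (ι.obj ((hQ.H i).obj F))) ↔
      (∃ B : Q, IsThickGeneratedBy N (ι.obj B)) := by
  obtain ⟨hN, hA, hA_min⟩ := hNA
  constructor
  · intro hH
    obtain ⟨B, hB, hB_gen⟩ :=
      hQ.exists_mem_heart_generating_of_forall_mem_H hN hSerre A (hH A hA)
    exact ⟨B, hN, hB, fun N' hN' hB' => hA_min N' hN' (hB_gen N' hN' hB')⟩
  · rintro ⟨B, -, hB, hB_min⟩ F hF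
    exact (hB_min _ (hQ.isThickSubcategory_and_forall_mem_H hN hSerre)
      ⟨hB, hQ.mem_H_ι_obj hN hB⟩ F hF).2

theorem statement_0 [IsTriangulated C]
    (Q : Type*) [Category Q] [Abelian Q] (ι : Q ⥤ C)
    (hQ : HeartOfBoundedTStructure Q ι)
    (N : C → Prop) (A : C) (hNA : IsThickGeneratedBy N A)
    (hSerre : IsSerreSubcategory (fun a : Q => N (ι.obj a))) :
    (∀ F : C, N F → ∀ i : ℤ, N (ι.obj ((hQ.H i).obj F))) ↔
      (∃ B : Q, IsThickGeneratedBy N (ι.obj B)) :=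
  statement_0_general Q ι hQ N A hNA hSerre

end PaperFormal
end

section
/- Let C be a triangulated category, Q the heart of a bounded t-structure on C with cohomology functors H^i : C → Q, and let N ⊆ C be a thick subcategory generated by a single object A ∈ C (N = ⟨A⟩). Assume that H^i(F) ∈ N for every F ∈ N and every i ∈ ℤ. Then the object B := ⊕_{i∈ℤ} H^i(A) lies in Q, and N equals the smallest thick subcategory of C containing B; in particular N is generated by an object of the heart Q. -/
open CategoryTheory CategoryTheory.Limits CategoryTheory.Category ZeroObject
  CategoryTheory.Pretriangulated CategoryTheory.Triangulated

namespace PaperFormal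

variable {C : Type*} [Category C] [HasZeroObject C] [HasShift C ℤ]
  [Preadditive C] [∀ n : ℤ, (shiftFunctor C n).Additive] [Pretriangulated C]

attribute [local instance] Abelian.hasFiniteBiproducts

/-!
`B` is a finite direct sum of the objects `H^i(A) ∈ N`, so it lies in `N`; here one uses that
the embedding of the heart, being fully faithful out of an additive category, preserves
biproducts. Conversely, every `H^i(A)` is a direct summand of `B` or zero, and the
cohomological filtration of `A` builds `A` out of the shifts `H^i(A)⟦-i⟧` by finitely many
extensions, so every thick subcategory containing `B` contains `A`, hence contains `N`.
-/

section FullyFaithful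

variable {D E : Type*} [Category D] [Preadditive D] [Category E] [Preadditive E]
  (F : D ⥤ E) [F.Full] [F.Faithful]

theorem _root_.CategoryTheory.Functor.preservesBinaryBiproducts_of_full_of_faithful :
    PreservesBinaryBiproducts F where
  preserves {X Y} := ⟨fun {b} hb => by
    have hs : F.preimage (F.map b.fst ≫ F.map b.inl + F.map b.snd ≫ F.map b.inr) = 𝟙 b.pt := by
      apply BinaryCofan.IsColimit.hom_ext hb.isColimit <;> apply F.map_injective <;> dsimp <;>
        simp [Preadditive.comp_add, ← F.map_comp_assoc]
    have htotal := congrArg F.map hs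
    rw [F.map_preimage, F.map_id] at htotal
    exact ⟨isBinaryBilimitOfTotal _ htotal⟩⟩

theorem _root_.CategoryTheory.Functor.additive_of_full_of_faithful [HasBinaryBiproducts D] :
    F.Additive :=
  have := F.preservesBinaryBiproducts_of_full_of_faithful
  F.additive_of_preservesBinaryBiproducts

end FullyFaithful

namespace IsThickSubcategory

variable {N : C → Prop}

theorem isClosedUnderIsomorphisms (hN : IsThickSubcategory N) :
    ObjectProperty.IsClosedUnderIsomorphisms N :=
  ⟨hN.mem_of_iso⟩

theorem isTriangulated (hN : IsThickSubcategory N) : ObjectProperty.IsTriangulated N where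
  exists_zero := ⟨0, isZero_zero C, hN.zero⟩
  isStableUnderShiftBy n := ⟨fun X hX => hN.shift X n hX⟩
  ext₂' T hT h₁ h₃ := ObjectProperty.le_isoClosure _ _ (hN.ext₂ T hT h₁ h₃)

theorem isStableUnderRetracts (hN : IsThickSubcategory N) :
    ObjectProperty.IsStableUnderRetracts N :=
  ⟨fun r hY => hN.summand _ _ r.i r.r r.retract hY⟩

end IsThickSubcategory

theorem _root_.CategoryTheory.ObjectProperty.prop_of_tower (P : ObjectProperty C)
    [P.IsTriangulated] [P.IsClosedUnderIsomorphisms] {F S : ℤ → C}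
    (hT : ∀ k, ∃ (f : F (k - 1) ⟶ F k) (g : F k ⟶ S k) (h : S k ⟶ (F (k - 1))⟦(1 : ℤ)⟧),
      Triangle.mk f g h ∈ distTriang C)
    (hS : ∀ k, P (S k)) {k₀ : ℤ} (h₀ : P (F k₀)) (k : ℤ) : P (F k) := by
  refine Int.inductionOn' k k₀ h₀ (fun k _ hk => ?_) (fun k _ hk => ?_)
  · obtain ⟨f, g, h, hT⟩ := hT (k + 1)
    exact P.ext_of_isTriangulatedClosed₂ _ hT (by simpa using hk) (hS _)
  · obtain ⟨f, g, h, hT⟩ := hT k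
    exact P.ext_of_isTriangulatedClosed₁ _ hT hk (hS k)

theorem HeartOfBoundedTStructure.prop_of_forall_prop_H {Q : Type*} [Category Q] [Abelian Q]
    {ι : Q ⥤ C} (hQ : HeartOfBoundedTStructure Q ι) (P : ObjectProperty C)
    [P.IsTriangulated] [P.IsClosedUnderIsomorphisms] (X : C)
    (hX : ∀ k, P (ι.obj ((hQ.H k).obj X))) : P X := by
  obtain ⟨a, b, F, hF, ⟨e⟩, hT⟩ := hQ.filtration X
  exact P.prop_of_iso e
    (P.prop_of_tower hT (fun k => P.le_shift (-k) _ (hX k)) (P.prop_of_isZero hF) b)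

theorem statement_2_general
    (Q : Type*) [Category Q] [Abelian Q] (ι : Q ⥤ C)
    (hQ : HeartOfBoundedTStructure Q ι)
    (N : C → Prop) (A : C) (hNA : IsThickGeneratedBy N A)
    (hH : ∀ F : C, N F → ∀ i : ℤ, N (ι.obj ((hQ.H i).obj F)))
    (a b : ℤ) (hab : ∀ i : ℤ, (i < a ∨ b < i) → IsZero ((hQ.H i).obj A)) :
    heartProp ι (ι.obj (⨁ fun i : { i : ℤ // i ∈ Finset.Icc a b } => (hQ.H (i : ℤ)).obj A)) ∧
      IsThickGeneratedBy N
        (ι.obj (⨁ fun i : { i : ℤ // i ∈ Finset.Icc a b } => (hQ.H (i : ℤ)).obj A)) := by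
  have := hQ.full
  have := hQ.faithful
  have := ι.additive_of_full_of_faithful
  obtain ⟨hN, hA, hmin⟩ := hNA
  refine ⟨⟨_, ⟨Iso.refl _⟩⟩, hN, ?_, fun N' hN' hB => hmin N' hN' ?_⟩
  · have := hN.isTriangulated
    have := hN.isClosedUnderIsomorphisms
    exact ObjectProperty.prop_of_iso N (ι.mapBiproduct _ ≪≫ biproduct.isoProduct _).symm
      (ObjectProperty.prop_product N fun i => hH A hA i)
  · have := hN'.isTriangulated
    have := hN'.isClosedUnderIsomorphisms
    have := hN'.isStableUnderRetracts
    refine hQ.prop_of_forall_prop_H N' A fun k => ?_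
    by_cases hk : k ∈ Finset.Icc a b
    · exact ObjectProperty.IsStableUnderRetracts.of_biproduct N' _
        (ObjectProperty.prop_of_iso N' (ι.mapBiproduct _) hB) ⟨k, hk⟩
    · refine ObjectProperty.prop_of_isZero N' (ι.map_isZero (hab k ?_))
      rw [Finset.mem_Icc] at hk
      omega

theorem statement_2 [IsTriangulated C]
    (Q : Type*) [Category Q] [Abelian Q] (ι : Q ⥤ C)
    (hQ : HeartOfBoundedTStructure Q ι)
    (N : C → Prop) (A : C) (hNA : IsThickGeneratedBy N A)
    (hH : ∀ F : C, N F → ∀ i : ℤ, N (ι.obj ((hQ.H i).obj F)))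
    (a b : ℤ) (hab : ∀ i : ℤ, (i < a ∨ b < i) → IsZero ((hQ.H i).obj A)) :
    heartProp ι (ι.obj (⨁ fun i : { i : ℤ // i ∈ Finset.Icc a b } => (hQ.H (i : ℤ)).obj A)) ∧
      IsThickGeneratedBy N
        (ι.obj (⨁ fun i : { i : ℤ // i ∈ Finset.Icc a b } => (hQ.H (i : ℤ)).obj A)) :=
  statement_2_general Q ι hQ N A hNA hH a b hab

end PaperFormal
end
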